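/- arXiv:2504.21220 — 4 statements merged into one kernel-verified Lean document; each statement's English description precedes it below -/
import Mathlib

section
/- For any family F of 3-uniform hypergraphs, the limit as n → ∞ of ex_pal(n, F)/n³ exists, where ex_pal(n,F) is the maximum number of patterns in an F-deficient palette on n colors. -/
/-- A 3-uniform hypergraph: a vertex type together with a set of edges,
each of which is a set of exactly three vertices. -/
structure ThreeGraph where
  V : Type
  E : Set (Set V)
  card_eq : ∀ e ∈ E, e.ncard = 3

/-- A palette `P ⊆ C³` paints a 3-graph `G` if there exist a strict total order `r`
on the vertices and a coloring `χ` of pairs of vertices by colors of `P` such that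
every edge `{x,y,z}` with `r x y` and `r y z` yields a pattern of `P`. -/
def Paints {C : Type} (P : Set (C × C × C)) (G : ThreeGraph) : Prop :=
  ∃ r : G.V → G.V → Prop, IsStrictTotalOrder G.V r ∧
    ∃ χ : G.V → G.V → C,
      ∀ e ∈ G.E, ∀ x y z : G.V, r x y → r y z → e = {x, y, z} →
        (χ x y, χ x z, χ y z) ∈ P

/-- A palette is `𝓕`-deficient if it paints no member of the family `𝓕`. -/
def Deficient {C : Type} (P : Set (C × C × C)) (𝓕 : Set ThreeGraph) : Prop :=
  ∀ F ∈ 𝓕, ¬ Paints P F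


/-- `exPal n 𝓕`: the maximum number of patterns of an `𝓕`-deficient palette on `n` colors. -/
noncomputable def exPal (n : ℕ) (𝓕 : Set ThreeGraph) : ℕ :=
  sSup {m | ∃ P : Finset (Fin n × Fin n × Fin n),
    Deficient (P : Set (Fin n × Fin n × Fin n)) 𝓕 ∧ P.card = m}

/-! Deleting one color from a deficient palette on `n + 1` colors leaves a deficient palette on
the other `n` colors, and every pattern survives the deletion of at least `n - 2` colors. Double
counting gives `exPal (n + 1) * (n - 2) ≤ (n + 1) * exPal n`, so `exPal n / C(n, 3)` is
non-increasing for `n ≥ 3`; being nonnegative it converges, and `C(n, 3) ~ n³ / 6`. -/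

open Finset Filter

lemma Paints.of_preimage {C D : Type} (f : C → D) {P : Set (D × D × D)} {G : ThreeGraph}
    (h : Paints (Prod.map f (Prod.map f f) ⁻¹' P) G) : Paints P G := by
  obtain ⟨r, hr, χ, hχ⟩ := h
  exact ⟨r, hr, fun a b => f (χ a b), hχ⟩

lemma Deficient.preimage {C D : Type} (f : C → D) {P : Set (D × D × D)} {𝓕 : Set ThreeGraph}
    (h : Deficient P 𝓕) : Deficient (Prod.map f (Prod.map f f) ⁻¹' P) 𝓕 :=
  fun F hF hP => h F hF (hP.of_preimage f)

lemma bddAbove_card_deficient (n : ℕ) (𝓕 : Set ThreeGraph) :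
    BddAbove {m | ∃ P : Finset (Fin n × Fin n × Fin n),
      Deficient (P : Set (Fin n × Fin n × Fin n)) 𝓕 ∧ P.card = m} :=
  ⟨Fintype.card (Fin n × Fin n × Fin n), by rintro _ ⟨P, -, rfl⟩; exact P.card_le_univ⟩

lemma card_le_exPal {n : ℕ} {𝓕 : Set ThreeGraph} {P : Finset (Fin n × Fin n × Fin n)}
    (hP : Deficient (P : Set (Fin n × Fin n × Fin n)) 𝓕) : #P ≤ exPal n 𝓕 :=
  le_csSup (bddAbove_card_deficient n 𝓕) ⟨P, hP, rfl⟩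

lemma exists_deficient_card_eq_exPal {n : ℕ} {𝓕 : Set ThreeGraph} (h : exPal n 𝓕 ≠ 0) :
    ∃ P : Finset (Fin n × Fin n × Fin n),
      Deficient (P : Set (Fin n × Fin n × Fin n)) 𝓕 ∧ #P = exPal n 𝓕 :=
  Nat.sSup_mem (Set.nonempty_iff_ne_empty.2 fun he => h (by simp [exPal, he]))
    (bddAbove_card_deficient n 𝓕)

lemma card_filter_mem_range_le_exPal {m n : ℕ} {𝓕 : Set ThreeGraph} {φ : Fin m → Fin n}
    (hφ : φ.Injective)
    {P : Finset (Fin n × Fin n × Fin n)} (hP : Deficient (P : Set (Fin n × Fin n × Fin n)) 𝓕)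
    [DecidablePred (· ∈ Set.range (Prod.map φ (Prod.map φ φ)))] :
    #{p ∈ P | p ∈ Set.range (Prod.map φ (Prod.map φ φ))} ≤ exPal m 𝓕 := by
  have hinj : (Prod.map φ (Prod.map φ φ)).Injective := hφ.prodMap (hφ.prodMap hφ)
  rw [← card_preimage P _ hinj.injOn]
  exact card_le_exPal (by rw [coe_preimage]; exact hP.preimage φ)

lemma card_mul_le_succ_mul_exPal {n : ℕ} {𝓕 : Set ThreeGraph}
    {P : Finset (Fin (n + 1) × Fin (n + 1) × Fin (n + 1))}
    (hP : Deficient (P : Set (Fin (n + 1) × Fin (n + 1) × Fin (n + 1))) 𝓕) :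
    #P * (n - 2) ≤ (n + 1) * exPal n 𝓕 := by
  classical
  have := card_mul_le_card_mul (s := P) (t := univ) (m := n - 2) (n := exPal n 𝓕)
    (fun p v => v ∉ ({p.1, p.2.1, p.2.2} : Finset (Fin (n + 1)))) ?_ ?_
  · simpa using this
  · intro p _
    rw [bipartiteAbove, filter_notMem_eq_sdiff, ← compl_eq_univ_sdiff, card_compl,
      Fintype.card_fin]
    have := card_le_three (a := p.1) (b := p.2.1) (c := p.2.2)
    omega
  · intro v _
    convert card_filter_mem_range_le_exPal (Fin.succAbove_right_injective (p := v)) hP using 3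
    simp [bipartiteBelow, Set.range_prodMap, eq_comm]

lemma exPal_succ_mul_le (n : ℕ) (𝓕 : Set ThreeGraph) :
    exPal (n + 1) 𝓕 * (n - 2) ≤ (n + 1) * exPal n 𝓕 := by
  by_cases h : exPal (n + 1) 𝓕 = 0
  · simp [h]
  obtain ⟨P, hP, hcard⟩ := exists_deficient_card_eq_exPal h
  exact hcard ▸ card_mul_le_succ_mul_exPal hP

lemma exPal_succ_mul_choose_three_le {n : ℕ} (hn : 3 ≤ n) (𝓕 : Set ThreeGraph) :
    exPal (n + 1) 𝓕 * n.choose 3 ≤ exPal n 𝓕 * (n + 1).choose 3 := by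
  have hchoose : n.choose 3 * (n + 1) = (n + 1).choose 3 * (n - 2) := by
    rw [Nat.choose_mul_succ_eq, show n + 1 - 3 = n - 2 by omega]
  refine Nat.le_of_mul_le_mul_right ?_ (show 0 < n - 2 by omega)
  calc exPal (n + 1) 𝓕 * n.choose 3 * (n - 2)
      = exPal (n + 1) 𝓕 * (n - 2) * n.choose 3 := by ring
    _ ≤ (n + 1) * exPal n 𝓕 * n.choose 3 := Nat.mul_le_mul_right _ (exPal_succ_mul_le n 𝓕)
    _ = exPal n 𝓕 * (n + 1).choose 3 * (n - 2) := by
        rw [mul_assoc, mul_assoc, ← hchoose]; ring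

lemma antitoneOn_exPal_div_choose_three (𝓕 : Set ThreeGraph) :
    AntitoneOn (fun n => (exPal n 𝓕 : ℝ) / n.choose 3) (Set.Ici 3) := by
  refine antitoneOn_nat_Ici_of_succ_le fun n hn => ?_
  rw [div_le_div_iff₀ (mod_cast Nat.choose_pos (by omega)) (mod_cast Nat.choose_pos hn)]
  exact_mod_cast exPal_succ_mul_choose_three_le hn 𝓕

lemma exists_tendsto_exPal_div_choose_three (𝓕 : Set ThreeGraph) :
    ∃ L : ℝ, Tendsto (fun n => (exPal n 𝓕 : ℝ) / n.choose 3) atTop (nhds L) :=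
  ⟨_, Real.tendsto_atTop_csInf_of_antitoneOn_bddBelow_nat_Ici
    (antitoneOn_exPal_div_choose_three 𝓕) ⟨0, by rintro _ ⟨n, -, rfl⟩; positivity⟩⟩

lemma tendsto_choose_div_pow (k : ℕ) :
    Tendsto (fun n : ℕ => (n.choose k : ℝ) / n ^ k) atTop (nhds (k.factorial : ℝ)⁻¹) := by
  have h := (isEquivalent_choose k).div
    (Asymptotics.IsEquivalent.refl (u := fun n : ℕ => (n : ℝ) ^ k))
  refine h.symm.tendsto_nhds (tendsto_const_nhds.congr' ?_)
  filter_upwards [eventually_ne_atTop 0] with n hn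
  simp only [Pi.div_apply]
  field_simp

open Filter in
/-- The limit of `ex_pal(n,𝓕)/n³` exists. -/
theorem exPal_div_cube_tendsto (𝓕 : Set ThreeGraph) :
    ∃ L : ℝ, Tendsto (fun n : ℕ => (exPal n 𝓕 : ℝ) / (n : ℝ) ^ 3) atTop (nhds L) := by
  obtain ⟨L, hL⟩ := exists_tendsto_exPal_div_choose_three 𝓕
  refine ⟨L * (Nat.factorial 3 : ℝ)⁻¹, (hL.mul (tendsto_choose_div_pow 3)).congr' ?_⟩
  filter_upwards [eventually_ge_atTop 3] with n hn
  exact div_mul_div_cancel₀ (mod_cast (Nat.choose_pos hn).ne')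
end

section
/- The quantity g(n,F)/(n(n-1)(n-2)) is non-increasing in n, where g(n,F) is the maximum number of patterns in a non-degenerate F-deficient palette on n colors. -/
/-- `gPal n 𝓕`: the maximum number of patterns of a non-degenerate
(`𝓕`-deficient) palette on `n` colors; non-degenerate means every pattern
has three pairwise distinct colors. -/
noncomputable def gPal (n : ℕ) (𝓕 : Set ThreeGraph) : ℕ :=
  sSup {m | ∃ P : Finset (Fin n × Fin n × Fin n),
    (∀ p ∈ P, p.1 ≠ p.2.1 ∧ p.1 ≠ p.2.2 ∧ p.2.1 ≠ p.2.2) ∧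
    Deficient (P : Set (Fin n × Fin n × Fin n)) 𝓕 ∧ P.card = m}

/-- An induced subpalette of a deficient palette is deficient. -/
lemma deficient_comp {C D : Type} (f : C → D) (P : Set (D × D × D)) (𝓕 : Set ThreeGraph)
    (hP : Deficient P 𝓕) :
    Deficient {q : C × C × C | (f q.1, f q.2.1, f q.2.2) ∈ P} 𝓕 := by
  intro F hF hpaint
  apply hP F hF
  obtain ⟨r, hr, χ, hχ⟩ := hpaint
  exact ⟨r, hr, fun x y => f (χ x y),
    fun e he x y z hxy hyz hexyz => hχ e he x y z hxy hyz hexyz⟩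

lemma bddAbove_gset (n : ℕ) (𝓕 : Set ThreeGraph) :
    BddAbove {m | ∃ P : Finset (Fin n × Fin n × Fin n),
      (∀ p ∈ P, p.1 ≠ p.2.1 ∧ p.1 ≠ p.2.2 ∧ p.2.1 ≠ p.2.2) ∧
      Deficient (P : Set (Fin n × Fin n × Fin n)) 𝓕 ∧ P.card = m} :=
  ⟨Fintype.card (Fin n × Fin n × Fin n), fun m hm => by
    obtain ⟨P, _, _, hc⟩ := hm
    exact hc ▸ P.card_le_univ⟩

/-- The key combinatorial inequality: `(n-2) g(n+1) ≤ (n+1) g(n)`. -/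
lemma gPal_key (𝓕 : Set ThreeGraph) (n : ℕ) (hn : 3 ≤ n) :
    (n - 2) * gPal (n + 1) 𝓕 ≤ (n + 1) * gPal n 𝓕 := by
  set S := {m | ∃ P : Finset (Fin (n+1) × Fin (n+1) × Fin (n+1)),
    (∀ p ∈ P, p.1 ≠ p.2.1 ∧ p.1 ≠ p.2.2 ∧ p.2.1 ≠ p.2.2) ∧
    Deficient (P : Set (Fin (n+1) × Fin (n+1) × Fin (n+1))) 𝓕 ∧ P.card = m} with hSdef
  have hg1 : gPal (n + 1) 𝓕 = sSup S := rfl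
  rcases Set.eq_empty_or_nonempty S with hS | hS
  · rw [hg1, hS, csSup_empty]
    simp
  have hmem : gPal (n + 1) 𝓕 ∈ S := hg1 ▸ Nat.sSup_mem hS (bddAbove_gset (n+1) 𝓕)
  obtain ⟨P, hnd, hdef, hcard⟩ := hmem
  classical
  -- counting: sum over deleted color c of the size of the induced palette
  have hinner : ∀ p ∈ P,
      (Finset.univ.filter fun c : Fin (n+1) => p.1 ≠ c ∧ p.2.1 ≠ c ∧ p.2.2 ≠ c).card
        = n - 2 := by
    intro p hp
    obtain ⟨h1, h2, h3⟩ := hnd p hp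
    have heq : (Finset.univ.filter fun c : Fin (n+1) => p.1 ≠ c ∧ p.2.1 ≠ c ∧ p.2.2 ≠ c)
        = ({p.1, p.2.1, p.2.2} : Finset (Fin (n+1)))ᶜ := by
      ext c
      simp only [Finset.mem_filter, Finset.mem_univ, true_and, Finset.mem_compl,
        Finset.mem_insert, Finset.mem_singleton, not_or]
      constructor
      · rintro ⟨h1, h2, h3⟩; exact ⟨fun h => h1 h.symm, fun h => h2 h.symm, fun h => h3 h.symm⟩
      · rintro ⟨h1, h2, h3⟩; exact ⟨fun h => h1 h.symm, fun h => h2 h.symm, fun h => h3 h.symm⟩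
    rw [heq, Finset.card_compl]
    rw [Finset.card_insert_of_notMem (by
        simp only [Finset.mem_insert, Finset.mem_singleton]; tauto),
      Finset.card_insert_of_notMem (by
        simp only [Finset.mem_singleton]; exact h3), Finset.card_singleton]
    rw [Fintype.card_fin]
    omega
  have hsum : ∑ c : Fin (n+1),
      (P.filter fun p => p.1 ≠ c ∧ p.2.1 ≠ c ∧ p.2.2 ≠ c).card = (n - 2) * P.card := by
    calc ∑ c : Fin (n+1), (P.filter fun p => p.1 ≠ c ∧ p.2.1 ≠ c ∧ p.2.2 ≠ c).card
        = ∑ c : Fin (n+1), ∑ p ∈ P, if p.1 ≠ c ∧ p.2.1 ≠ c ∧ p.2.2 ≠ c then 1 else 0 := by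
          simp only [Finset.card_filter]
      _ = ∑ p ∈ P, ∑ c : Fin (n+1), if p.1 ≠ c ∧ p.2.1 ≠ c ∧ p.2.2 ≠ c then 1 else 0 :=
          Finset.sum_comm
      _ = ∑ p ∈ P, (n - 2) := Finset.sum_congr rfl (fun p hp => by
          rw [← Finset.card_filter]; exact hinner p hp)
      _ = (n - 2) * P.card := by rw [Finset.sum_const, smul_eq_mul, mul_comm]
  -- pigeonhole: some color c does well
  have hpig : ∃ c : Fin (n+1), (n - 2) * P.card ≤
      (n + 1) * (P.filter fun p => p.1 ≠ c ∧ p.2.1 ≠ c ∧ p.2.2 ≠ c).card := by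
    have hle : ∑ _c : Fin (n+1), (n - 2) * P.card ≤ ∑ c : Fin (n+1),
        (n + 1) * (P.filter fun p => p.1 ≠ c ∧ p.2.1 ≠ c ∧ p.2.2 ≠ c).card := by
      have hr : ∑ c : Fin (n+1),
          (n + 1) * (P.filter fun p => p.1 ≠ c ∧ p.2.1 ≠ c ∧ p.2.2 ≠ c).card
          = (n + 1) * ((n - 2) * P.card) := by rw [← Finset.mul_sum, hsum]
      rw [hr, Finset.sum_const, Finset.card_univ, Fintype.card_fin, smul_eq_mul, mul_comm]
    obtain ⟨c, _, hc⟩ := Finset.exists_le_of_sum_le Finset.univ_nonempty hle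
    exact ⟨c, hc⟩
  obtain ⟨c, hc⟩ := hpig
  -- the induced palette on n colors
  set e : Fin n → Fin (n+1) := c.succAbove with he
  have hei : Function.Injective e := Fin.succAbove_right_injective
  set Q : Finset (Fin n × Fin n × Fin n) :=
    Finset.univ.filter fun q => (e q.1, e q.2.1, e q.2.2) ∈ P with hQ
  have hQcard : (P.filter fun p => p.1 ≠ c ∧ p.2.1 ≠ c ∧ p.2.2 ≠ c).card = Q.card := by
    refine (Finset.card_bij (fun q _ => (e q.1, e q.2.1, e q.2.2)) ?_ ?_ ?_).symm
    · intro q hq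
      simp only [hQ, Finset.mem_filter, Finset.mem_univ, true_and] at hq
      simp only [Finset.mem_filter]
      exact ⟨hq, Fin.succAbove_ne c q.1, Fin.succAbove_ne c q.2.1, Fin.succAbove_ne c q.2.2⟩
    · intro q1 _ q2 _ h
      rw [Prod.mk.injEq, Prod.mk.injEq] at h
      obtain ⟨h1, h2, h3⟩ := h
      exact Prod.ext (hei h1) (Prod.ext (hei h2) (hei h3))
    · intro p hp
      simp only [Finset.mem_filter] at hp
      obtain ⟨hpP, hp1, hp2, hp3⟩ := hp
      obtain ⟨a, ha⟩ := Fin.exists_succAbove_eq hp1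
      obtain ⟨b, hb⟩ := Fin.exists_succAbove_eq hp2
      obtain ⟨d, hd⟩ := Fin.exists_succAbove_eq hp3
      refine ⟨(a, b, d), ?_, ?_⟩
      · simp only [hQ, Finset.mem_filter, Finset.mem_univ, true_and]
        simpa [he, ha, hb, hd] using hpP
      · simp [he, ha, hb, hd]
  have hQnd : ∀ q ∈ Q, q.1 ≠ q.2.1 ∧ q.1 ≠ q.2.2 ∧ q.2.1 ≠ q.2.2 := by
    intro q hq
    simp only [hQ, Finset.mem_filter, Finset.mem_univ, true_and] at hq
    obtain ⟨h1, h2, h3⟩ := hnd _ hq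
    exact ⟨fun h => h1 (by rw [h]), fun h => h2 (by rw [h]), fun h => h3 (by rw [h])⟩
  have hQdef : Deficient (Q : Set (Fin n × Fin n × Fin n)) 𝓕 := by
    have hset : (Q : Set (Fin n × Fin n × Fin n))
        = {q : Fin n × Fin n × Fin n | (e q.1, e q.2.1, e q.2.2) ∈ (P : Set _)} := by
      ext q; simp [hQ]
    rw [hset]
    exact deficient_comp e (P : Set _) 𝓕 hdef
  have hQle : Q.card ≤ gPal n 𝓕 :=
    le_csSup (bddAbove_gset n 𝓕) ⟨Q, hQnd, hQdef, rfl⟩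
  calc (n - 2) * gPal (n + 1) 𝓕 = (n - 2) * P.card := by rw [hcard]
    _ ≤ (n + 1) * (P.filter fun p => p.1 ≠ c ∧ p.2.1 ≠ c ∧ p.2.2 ≠ c).card := hc
    _ = (n + 1) * Q.card := by rw [hQcard]
    _ ≤ (n + 1) * gPal n 𝓕 := Nat.mul_le_mul_left _ hQle

/-- `g(n,𝓕)/(n(n-1)(n-2))` is non-increasing in `n`. -/
theorem gPal_ratio_antitone (𝓕 : Set ThreeGraph) (n : ℕ) (hn : 3 ≤ n) :
    (gPal (n + 1) 𝓕 : ℝ) / (((n : ℝ) + 1) * (n : ℝ) * ((n : ℝ) - 1)) ≤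
      (gPal n 𝓕 : ℝ) / ((n : ℝ) * ((n : ℝ) - 1) * ((n : ℝ) - 2)) := by
  have hn3 : (3 : ℝ) ≤ (n : ℝ) := by exact_mod_cast hn
  have key := gPal_key 𝓕 n hn
  have keyR : ((n : ℝ) - 2) * (gPal (n + 1) 𝓕 : ℝ) ≤ ((n : ℝ) + 1) * (gPal n 𝓕 : ℝ) := by
    have := (Nat.cast_le (α := ℝ)).2 key
    push_cast [Nat.cast_sub (by omega : 2 ≤ n)] at this
    convert this using 2
  have hd1 : (0 : ℝ) < ((n : ℝ) + 1) * (n : ℝ) * ((n : ℝ) - 1) :=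
    mul_pos (mul_pos (by linarith) (by linarith)) (by linarith)
  have hd2 : (0 : ℝ) < (n : ℝ) * ((n : ℝ) - 1) * ((n : ℝ) - 2) :=
    mul_pos (mul_pos (by linarith) (by linarith)) (by linarith)
  rw [div_le_div_iff₀ hd1 hd2]
  have hnn : (0 : ℝ) ≤ (n : ℝ) * ((n : ℝ) - 1) := by nlinarith
  nlinarith [mul_le_mul_of_nonneg_right keyR hnn]
end

section
/- For every integer k ≥ 2 there exists an ordered linear k-uniform hypergraph (H,<) such that for every total ordering ⊏ of V(H) there is an edge {x₁,…,x_k} with x₁ < ⋯ < x_k that is either increasing (x₁ ⊏ ⋯ ⊏ x_k) or decreasing (x₁ ⊐ ⋯ ⊐ x_k) with respect to ⊏. -/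
/-!
For a fixed ordering, a positive proportion of all `k`-sets is monotone: by the
Erdős–Szekeres argument every `centralBinom (k - 1)` points contain a monotone `k`-set, and
double counting spreads this to density at least `1 / a` with `a = C(centralBinom (k - 1), k)`.
The hypergraph is built greedily. While it has few edges, the `k`-sets meeting an edge in two
points form a fraction at most `|E| C(k,2)² / C(N,2)` of all `k`-sets, so some admissible
`k`-set is monotone for a `1 / 2a` fraction of the orderings not yet hit. After `s` steps at most
`N! (1 - 1/2a)^s` orderings are left, and taking `N` a large power of two leaves room for
`s ≈ 2a N log N` steps.
-/

open Finset

section ErdosSzekeres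

variable {α β : Type*} [LinearOrder α] [LinearOrder β] {f : α → β}

theorem exists_strictMonoOn_or_strictAntiOn_of_choose_le {s : Finset α} (hf : Set.InjOn f s)
    (a b : ℕ) (hs : (a + b).choose a ≤ #s) :
    (∃ t ⊆ s, a < #t ∧ StrictMonoOn f t) ∨ (∃ t ⊆ s, b < #t ∧ StrictAntiOn f t) := by
  induction a generalizing b s with
  | zero =>
    obtain ⟨x, hx⟩ : s.Nonempty := card_pos.1 (by simpa using hs)
    exact .inl ⟨{x}, by simpa using hx, by simp, by simp⟩
  | succ a iha =>
    induction b generalizing s with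
    | zero =>
      obtain ⟨x, hx⟩ : s.Nonempty := card_pos.1 (by simpa using hs)
      exact .inr ⟨{x}, by simpa using hx, by simp, by simp⟩
    | succ b ihb =>
      have hne : s.Nonempty := card_pos.1 (lt_of_lt_of_le (Nat.choose_pos (by omega)) hs)
      set x := s.min' hne
      set U := (s.erase x).filter (f x < f ·)
      set D := (s.erase x).filter (¬ f x < f ·)
      have hUD : #U + #D + 1 = #s := by
        rw [card_filter_add_card_filter_not, card_erase_add_one (s.min'_mem hne)]
      have hUs : U ⊆ s := (filter_subset _ _).trans (erase_subset _ _)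
      have hDs : D ⊆ s := (filter_subset _ _).trans (erase_subset _ _)
      have hpascal : (a + 1 + (b + 1)).choose (a + 1)
          = (a + (b + 1)).choose a + (a + 1 + b).choose (a + 1) := by
        rw [show a + 1 + (b + 1) = a + b + 1 + 1 by omega, show a + (b + 1) = a + b + 1 by omega,
          show a + 1 + b = a + b + 1 by omega, Nat.choose_succ_succ]
      by_cases hU : (a + (b + 1)).choose a ≤ #U
      · rcases iha (hf.mono hUs) (b + 1) hU with ⟨t, htU, hat, ht⟩ | ⟨t, htU, hbt, ht⟩
        · have hxt : x ∉ t := fun h => by simpa [U] using htU h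
          refine .inl ⟨insert x t, insert_subset (s.min'_mem hne) (htU.trans hUs),
            by rw [card_insert_of_notMem hxt]; omega, ?_⟩
          rw [coe_insert, strictMonoOn_insert_iff_of_forall_ge
            fun y hy => s.min'_le y (hUs (htU hy))]
          exact ⟨fun y hy _ => (mem_filter.1 (htU hy)).2, ht⟩
        · exact .inr ⟨t, htU.trans hUs, hbt, ht⟩
      · have hD : (a + 1 + b).choose (a + 1) ≤ #D := by omega
        rcases ihb (hf.mono hDs) hD with ⟨t, htD, hat, ht⟩ | ⟨t, htD, hbt, ht⟩
        · exact .inl ⟨t, htD.trans hDs, hat, ht⟩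
        · have hxt : x ∉ t := fun h => by simpa [D] using htD h
          refine .inr ⟨insert x t, insert_subset (s.min'_mem hne) (htD.trans hDs),
            by rw [card_insert_of_notMem hxt]; omega, ?_⟩
          rw [coe_insert, strictAntiOn_insert_iff_of_forall_ge
            fun y hy => s.min'_le y (hDs (htD hy))]
          refine ⟨fun y hy _ => ?_, ht⟩
          obtain ⟨hy', hxy⟩ := mem_filter.1 (htD hy)
          obtain ⟨hyx, hys⟩ := mem_erase.1 hy'
          exact (not_lt.1 hxy).lt_of_ne fun h => hyx (hf hys (s.min'_mem hne) h)

def IsMonoOn (f : α → β) (s : Finset α) : Prop := StrictMonoOn f s ∨ StrictAntiOn f s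

theorem exists_isMonoOn_subset_card_eq (hf : Function.Injective f) {k : ℕ} {s : Finset α}
    (hs : (k - 1).centralBinom ≤ #s) : ∃ e ⊆ s, #e = k ∧ IsMonoOn f e := by
  rw [Nat.centralBinom_eq_two_mul_choose, two_mul] at hs
  obtain ⟨t, hts, hkt, ht⟩ | ⟨t, hts, hkt, ht⟩ :=
    exists_strictMonoOn_or_strictAntiOn_of_choose_le hf.injOn _ _ hs
  all_goals obtain ⟨e, het, hek⟩ := exists_subset_card_eq (show k ≤ #t by omega)
  · exact ⟨e, het.trans hts, hek, .inl (ht.mono (coe_subset.2 het))⟩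
  · exact ⟨e, het.trans hts, hek, .inr (ht.mono (coe_subset.2 het))⟩

end ErdosSzekeres

theorem le_centralBinom_pred (k : ℕ) : k ≤ (k - 1).centralBinom := by
  have := Nat.le_of_dvd (Nat.centralBinom_pos _) (Nat.succ_dvd_centralBinom (k - 1))
  omega

section Density

variable {α β : Type*} [LinearOrder α] [Fintype α] [LinearOrder β]

open Classical in
noncomputable def monoSets (k : ℕ) (f : α → β) : Finset (Finset α) :=
  {e ∈ powersetCard k univ | IsMonoOn f e}

theorem choose_le_mul_card_monoSets {f : α → β} (hf : Function.Injective f) {k : ℕ}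
    (hq : (k - 1).centralBinom ≤ Fintype.card α) :
    (Fintype.card α).choose k ≤ ((k - 1).centralBinom.choose k) * #(monoSets k f) := by
  classical
  set q := (k - 1).centralBinom
  set n := Fintype.card α
  have hkq : k ≤ q := le_centralBinom_pred k
  have hcount : #(powersetCard q (univ : Finset α)) * 1
      ≤ #(monoSets k f) * (n - k).choose (q - k) := by
    refine card_mul_le_card_mul (fun Q e => e ⊆ Q) (fun Q hQ => ?_) (fun e he => ?_)
    · obtain ⟨e, heQ, hek, he⟩ :=
        exists_isMonoOn_subset_card_eq hf (mem_powersetCard_univ.1 hQ).ge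
      exact card_pos.2 ⟨e, (mem_bipartiteAbove _).2 ⟨by simp [monoSets, hek, he], heQ⟩⟩
    · have hek : #e = k := (mem_powersetCard.1 (mem_filter.1 he).1).2
      rw [bipartiteBelow, card_filter_powersetCard_subset e univ q (subset_univ _) (hek ▸ hkq),
        card_univ, hek]
  have hpos : 0 < (n - k).choose (q - k) := Nat.choose_pos (by omega)
  rw [card_powersetCard, card_univ, mul_one] at hcount
  refine Nat.le_of_mul_le_mul_right ?_ hpos
  calc n.choose k * (n - k).choose (q - k) = n.choose q * q.choose k :=
        (Nat.choose_mul hkq).symm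
    _ ≤ #(monoSets k f) * (n - k).choose (q - k) * q.choose k := Nat.mul_le_mul_right _ hcount
    _ = q.choose k * #(monoSets k f) * (n - k).choose (q - k) := by ring

end Density

theorem Finset.exists_mem_card_le_mul_card_filter {ι κ : Type*} {X : Finset ι} {Φ : Finset κ}
    (r : κ → ι → Prop) [∀ φ x, Decidable (r φ x)] {b : ℕ} (hX : X.Nonempty)
    (h : ∀ φ ∈ Φ, #X ≤ b * #{x ∈ X | r φ x}) : ∃ x ∈ X, #Φ ≤ b * #{φ ∈ Φ | r φ x} := by
  refine exists_le_of_sum_le hX ?_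
  calc ∑ _x ∈ X, #Φ = ∑ _φ ∈ Φ, #X := by simp only [sum_const, smul_eq_mul, mul_comm]
    _ ≤ ∑ φ ∈ Φ, b * #{x ∈ X | r φ x} := sum_le_sum h
    _ = ∑ x ∈ X, b * #{φ ∈ Φ | r φ x} := by
      rw [← mul_sum, ← mul_sum]
      exact congrArg _ (sum_card_bipartiteAbove_eq_sum_card_bipartiteBelow r)

section Conflicts

variable {α : Type*} [Fintype α] [DecidableEq α] {k : ℕ}

open Classical in
noncomputable def blocked (k : ℕ) (E : Finset (Finset α)) : Finset (Finset α) :=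
  {e ∈ powersetCard k univ | ∃ f ∈ E, 2 ≤ #(e ∩ f)}

theorem card_filter_two_le_card_inter_mul_le (hk : 2 ≤ k) {f : Finset α} (hf : #f = k) :
    #{e ∈ powersetCard k (univ : Finset α) | 2 ≤ #(e ∩ f)} * (Fintype.card α).choose 2
      ≤ k.choose 2 * k.choose 2 * (Fintype.card α).choose k := by
  set n := Fintype.card α
  have hcover : {e ∈ powersetCard k (univ : Finset α) | 2 ≤ #(e ∩ f)}
      ⊆ (f.powersetCard 2).biUnion fun d => {e ∈ powersetCard k univ | d ⊆ e} := by
    intro e he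
    obtain ⟨he, h2⟩ := mem_filter.1 he
    obtain ⟨d, hd, hd2⟩ := exists_subset_card_eq h2
    exact mem_biUnion.2 ⟨d, mem_powersetCard.2 ⟨hd.trans inter_subset_right, hd2⟩,
      mem_filter.2 ⟨he, hd.trans inter_subset_left⟩⟩
  have hsupersets : ∀ d ∈ f.powersetCard 2, #{e ∈ powersetCard k (univ : Finset α) | d ⊆ e}
      = (n - 2).choose (k - 2) := by
    intro d hd
    rw [← (mem_powersetCard.1 hd).2, card_filter_powersetCard_subset d univ k (subset_univ _)
      (by rw [(mem_powersetCard.1 hd).2]; exact hk), card_univ]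
  calc _ ≤ (∑ d ∈ f.powersetCard 2, #{e ∈ powersetCard k (univ : Finset α) | d ⊆ e}) * n.choose 2 :=
        Nat.mul_le_mul_right _ ((card_le_card hcover).trans card_biUnion_le)
    _ = k.choose 2 * (n.choose 2 * (n - 2).choose (k - 2)) := by
        rw [sum_congr rfl hsupersets, sum_const, card_powersetCard, hf, smul_eq_mul]; ring
    _ = k.choose 2 * k.choose 2 * n.choose k := by rw [← Nat.choose_mul hk]; ring

theorem card_blocked_mul_choose_two_le (hk : 2 ≤ k) {E : Finset (Finset α)}
    (hE : ∀ f ∈ E, #f = k) :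
    #(blocked k E) * (Fintype.card α).choose 2
      ≤ #E * (k.choose 2 * k.choose 2 * (Fintype.card α).choose k) := by
  classical
  have hunion : blocked k E = E.biUnion fun f => {e ∈ powersetCard k univ | 2 ≤ #(e ∩ f)} := by
    ext e
    simp only [blocked, mem_filter, mem_biUnion]
    tauto
  rw [hunion]
  calc _ ≤ (∑ f ∈ E, #{e ∈ powersetCard k (univ : Finset α) | 2 ≤ #(e ∩ f)})
        * (Fintype.card α).choose 2 := Nat.mul_le_mul_right _ card_biUnion_le
    _ ≤ _ := by
      rw [sum_mul]
      exact sum_le_card_nsmul _ _ _ fun f hf => card_filter_two_le_card_inter_mul_le hk (hE f hf)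

end Conflicts

section Greedy

open Equiv

variable {α : Type*} [LinearOrder α] [Fintype α] {k b : ℕ}

open Classical in
theorem exists_compatible_edge_hitting (hk : 2 ≤ k) (hkn : k ≤ Fintype.card α)
    (hdens : ∀ φ : Perm α, 2 * (Fintype.card α).choose k ≤ b * #(monoSets k φ))
    {E : Finset (Finset α)} (hE : ∀ f ∈ E, #f = k)
    (hEb : b * #E * k.choose 2 ^ 2 ≤ (Fintype.card α).choose 2) (Φ : Finset (Perm α)) :
    ∃ e : Finset α, #e = k ∧ (∀ f ∈ E, #(e ∩ f) ≤ 1) ∧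
      #Φ ≤ b * #(Φ.filter fun φ : Perm α => IsMonoOn φ e) := by
  set n := Fintype.card α
  set C := powersetCard k (univ : Finset α) \ blocked k E
  have hblocked : b * #(blocked k E) ≤ n.choose k := by
    have hn2 : 0 < n.choose 2 := Nat.choose_pos (by omega)
    refine Nat.le_of_mul_le_mul_right ?_ hn2
    calc b * #(blocked k E) * n.choose 2
        ≤ b * (#E * (k.choose 2 * k.choose 2 * n.choose k)) := by
          rw [mul_assoc]
          exact Nat.mul_le_mul_left _ (card_blocked_mul_choose_two_le hk hE)
      _ = b * #E * k.choose 2 ^ 2 * n.choose k := by ring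
      _ ≤ n.choose k * n.choose 2 := by rw [mul_comm _ (n.choose 2)]; gcongr
  have hC : #C ≤ n.choose k := by
    simpa [n] using card_le_card (sdiff_subset (s := powersetCard k (univ : Finset α)))
  have hmono (φ : Perm α) : n.choose k ≤ b * #{e ∈ C | IsMonoOn φ e} := by
    have hsplit : monoSets k φ ⊆ {e ∈ C | IsMonoOn φ e} ∪ blocked k E := by
      intro e he
      obtain ⟨hek, he⟩ := mem_filter.1 he
      by_cases heE : e ∈ blocked k E
      · exact mem_union_right _ heE
      · exact mem_union_left _ (mem_filter.2 ⟨mem_sdiff.2 ⟨hek, heE⟩, he⟩)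
    have := Nat.mul_le_mul_left b ((card_le_card hsplit).trans (card_union_le _ _))
    linarith [hdens φ]
  have hCne : C.Nonempty := by
    have := (Nat.choose_pos hkn).trans_le (hmono 1)
    exact (card_pos.1 (Nat.pos_of_mul_pos_left this)).mono (filter_subset _ _)
  obtain ⟨e, heC, he⟩ := exists_mem_card_le_mul_card_filter
    (fun (φ : Perm α) (e : Finset α) => IsMonoOn φ e) hCne fun φ _ => hC.trans (hmono φ)
  obtain ⟨hek, heE⟩ := mem_sdiff.1 heC
  refine ⟨e, (mem_powersetCard.1 hek).2, fun f hf => ?_, he⟩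
  by_contra! h
  exact heE (mem_filter.2 ⟨hek, f, hf, h⟩)

open Classical in
noncomputable def avoiders (E : Finset (Finset α)) : Finset (Perm α) :=
  {φ | ∀ e ∈ E, ¬ IsMonoOn φ e}

@[simp]
theorem mem_avoiders {E : Finset (Finset α)} {φ : Perm α} :
    φ ∈ avoiders E ↔ ∀ e ∈ E, ¬ IsMonoOn φ e := by
  simp [avoiders]

open Classical in
theorem avoiders_insert (e : Finset α) (E : Finset (Finset α)) :
    avoiders (insert e E) = (avoiders E).filter fun φ : Perm α => ¬ IsMonoOn φ e := by
  ext φ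
  simp only [mem_avoiders, mem_filter, forall_mem_insert]
  tauto

theorem exists_linear_card_avoiders_mul_pow_le (hk : 2 ≤ k) (hkn : k ≤ Fintype.card α)
    (hdens : ∀ φ : Perm α, 2 * (Fintype.card α).choose k ≤ b * #(monoSets k φ)) (s : ℕ)
    (hs : b * s * k.choose 2 ^ 2 ≤ (Fintype.card α).choose 2) :
    ∃ E : Finset (Finset α), (∀ e ∈ E, #e = k) ∧
      (∀ e ∈ E, ∀ f ∈ E, e ≠ f → #(e ∩ f) ≤ 1) ∧ #E ≤ s ∧
      #(avoiders E) * b ^ s ≤ (Fintype.card α).factorial * (b - 1) ^ s := by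
  classical
  induction s with
  | zero =>
    refine ⟨∅, by simp, by simp, by simp, ?_⟩
    simpa [Fintype.card_perm] using card_le_univ (avoiders (∅ : Finset (Finset α)))
  | succ s ih =>
    obtain ⟨E, hE, hlin, hEs, hav⟩ := ih (le_trans (by gcongr; omega) hs)
    obtain ⟨e, hek, hcompat, hhit⟩ := exists_compatible_edge_hitting hk hkn hdens hE
      (le_trans (by gcongr; omega) hs) (avoiders E)
    refine ⟨insert e E, (forall_mem_insert _ _ _).2 ⟨hek, hE⟩, ?_,
      (card_insert_le _ _).trans (by omega), ?_⟩
    · simp only [mem_insert]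
      rintro x (rfl | hx) y (rfl | hy) hxy
      · exact absurd rfl hxy
      · exact hcompat y hy
      · exact inter_comm x y ▸ hcompat x hx
      · exact hlin x hx y hy hxy
    · have hsplit := card_filter_add_card_filter_not (s := avoiders E)
        fun φ : Perm α => IsMonoOn φ e
      have hshrink : b * #(avoiders (insert e E)) ≤ (b - 1) * #(avoiders E) := by
        have := congrArg (b * ·) hsplit
        simp only [mul_add] at this
        rw [avoiders_insert, Nat.sub_one_mul]
        omega
      calc #(avoiders (insert e E)) * b ^ (s + 1)
          = b * #(avoiders (insert e E)) * b ^ s := by ring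
        _ ≤ (b - 1) * (#(avoiders E) * b ^ s) := by rw [← mul_assoc]; gcongr
        _ ≤ (b - 1) * ((Fintype.card α).factorial * (b - 1) ^ s) := by gcongr
        _ = (Fintype.card α).factorial * (b - 1) ^ (s + 1) := by ring

end Greedy

section Parameters

theorem two_mul_pow_le_succ_pow (m : ℕ) : 2 * m ^ (m + 1) ≤ (m + 1) ^ (m + 1) := by
  rcases m.eq_zero_or_pos with rfl | hm
  · simp
  have hm' : (0 : ℚ) < m := by exact_mod_cast hm
  have hinv : (0 : ℚ) ≤ 1 / m := by positivity
  have hbern := one_add_mul_le_pow (a := (1 / m : ℚ)) (by linarith) (m + 1)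
  have hbase : (1 + 1 / m : ℚ) ^ (m + 1) = ((m : ℚ) + 1) ^ (m + 1) / (m : ℚ) ^ (m + 1) := by
    rw [← div_pow]; congr 1; field_simp
  have h2 : (2 : ℚ) ≤ 1 + ((m + 1 : ℕ) : ℚ) * (1 / m) := by
    push_cast
    rw [add_mul, one_mul, mul_one_div_cancel hm'.ne']
    linarith
  rw [hbase, le_div_iff₀ (by positivity)] at hbern
  exact_mod_cast (mul_le_mul_of_nonneg_right h2 (by positivity)).trans hbern

theorem exists_mul_succ_lt_two_pow (C q : ℕ) : ∃ p, q ≤ p ∧ C * (p + 1) < 2 ^ p := by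
  obtain ⟨n, hCn, hqn⟩ : ∃ n, 2 * C + 1 ≤ n ∧ q ≤ n := ⟨2 * C + q + 1, by omega, by omega⟩
  refine ⟨2 * n, by omega, ?_⟩
  have hn : n + 1 ≤ 2 ^ n := Nat.lt_two_pow_self
  calc C * (2 * n + 1) < (n + 1) * (n + 1) := by nlinarith
    _ ≤ 2 ^ n * 2 ^ n := Nat.mul_le_mul hn hn
    _ = 2 ^ (2 * n) := by rw [← pow_add, two_mul]

theorem exists_factorial_mul_pred_pow_lt_pow (b K q : ℕ) (hb : 2 ≤ b) :
    ∃ N s : ℕ, q ≤ N ∧ b * s * K ≤ N.choose 2 ∧ N.factorial * (b - 1) ^ s < b ^ s := by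
  obtain ⟨p, hqp, hp⟩ := exists_mul_succ_lt_two_pow (2 * b * b * K) q
  -- `N! ≤ N ^ N = 2 ^ (p * N) < 2 ^ u`, while `(1 - 1/b) ^ (b * u) ≤ 2 ^ (-u)`
  set N := 2 ^ p
  set u := p * N + 1
  have hN : 1 ≤ N := Nat.one_le_two_pow
  refine ⟨N, b * u, hqp.trans Nat.lt_two_pow_self.le, ?_, ?_⟩
  · have hchoose : N * (N - 1) = N.choose 2 * 2 := by
      simpa [Nat.sub_add_cancel hN] using Nat.add_one_mul_choose_eq (N - 1) 1
    have hu : u ≤ (p + 1) * N := by simp only [u]; nlinarith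
    refine Nat.le_of_mul_le_mul_right ?_ (two_pos : 0 < 2)
    calc b * (b * u) * K * 2 = 2 * b * b * K * u := by ring
      _ ≤ 2 * b * b * K * ((p + 1) * N) := Nat.mul_le_mul_left _ hu
      _ = 2 * b * b * K * (p + 1) * N := by ring
      _ ≤ (N - 1) * N := Nat.mul_le_mul_right _ (by omega)
      _ = N.choose 2 * 2 := by rw [mul_comm, hchoose]
  · have hkey : 2 ^ u * (b - 1) ^ (b * u) ≤ b ^ (b * u) := by
      have := two_mul_pow_le_succ_pow (b - 1)
      rw [Nat.sub_add_cancel (by omega : 1 ≤ b)] at this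
      rw [pow_mul, pow_mul, ← mul_pow]
      exact Nat.pow_le_pow_left this u
    have hpos : 0 < (b - 1) ^ (b * u) := Nat.pow_pos (by omega)
    calc N.factorial * (b - 1) ^ (b * u) ≤ 2 ^ (p * N) * (b - 1) ^ (b * u) := by
          gcongr
          exact (Nat.factorial_le_pow N).trans_eq (by rw [pow_mul])
      _ < 2 ^ u * (b - 1) ^ (b * u) := by gcongr <;> omega
      _ ≤ b ^ (b * u) := hkey

end Parameters

theorem exists_equiv_fin_lt_iff {γ : Type*} [Fintype γ] (r : γ → γ → Prop)
    [IsStrictTotalOrder γ r] : ∃ φ : γ ≃ Fin (Fintype.card γ), ∀ x y, r x y ↔ φ x < φ y := by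
  classical
  let := linearOrderOfSTO r
  exact ⟨(Fintype.orderIsoFinOfCardEq γ rfl).symm.toEquiv,
    fun x y => ((Fintype.orderIsoFinOfCardEq γ rfl).symm.lt_iff_lt (x := x) (y := y)).symm⟩

theorem IsMonoOn.exists_strictMono_image_eq {α β : Type*} [LinearOrder α] [LinearOrder β]
    {f : α → β} {k : ℕ} {e : Finset α} (hf : IsMonoOn f e) (he : #e = k) :
    ∃ x : Fin k → α, StrictMono x ∧ e = image x univ ∧
      ((∀ i j, i < j → f (x i) < f (x j)) ∨ (∀ i j, i < j → f (x j) < f (x i))) := by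
  have hmem := e.orderEmbOfFin_mem he
  have hx := (e.orderEmbOfFin he).strictMono
  exact ⟨e.orderEmbOfFin he, hx, (image_orderEmbOfFin_univ e he).symm,
    hf.imp (fun h i j hij => h (hmem i) (hmem j) (hx hij))
      (fun h i j hij => h (hmem i) (hmem j) (hx hij))⟩

/-- For every `k ≥ 2` there is an ordered linear `k`-uniform hypergraph `(H,<)`
(on vertex set `Fin N` with its natural order) such that for every total order `⊏`
on the vertices there is an edge `{x₁,…,x_k}` with `x₁ < ⋯ < x_k` which is either
increasing or decreasing with respect to `⊏`. -/
theorem exists_ordered_linear_unavoidable (k : ℕ) (hk : 2 ≤ k) :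
    ∃ (N : ℕ) (E : Finset (Finset (Fin N))),
      (∀ e ∈ E, e.card = k) ∧
      (∀ e ∈ E, ∀ f ∈ E, e ≠ f → (e ∩ f).card ≤ 1) ∧
      ∀ r : Fin N → Fin N → Prop, IsStrictTotalOrder (Fin N) r →
        ∃ e ∈ E, ∃ x : Fin k → Fin N, StrictMono x ∧ e = Finset.image x Finset.univ ∧
          ((∀ i j : Fin k, i < j → r (x i) (x j)) ∨
            (∀ i j : Fin k, i < j → r (x j) (x i))) := by
  obtain ⟨q, hq⟩ : ∃ q, q = (k - 1).centralBinom := ⟨_, rfl⟩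
  have hkq : k ≤ q := hq ▸ le_centralBinom_pred k
  obtain ⟨N, s, hqN, hs, hfac⟩ :=
    exists_factorial_mul_pred_pow_lt_pow (2 * q.choose k) (k.choose 2 ^ 2) q
      (by have := Nat.choose_pos hkq; omega)
  have hdens (φ : Equiv.Perm (Fin N)) : 2 * N.choose k ≤ 2 * q.choose k * #(monoSets k φ) := by
    have := choose_le_mul_card_monoSets φ.injective (k := k) (by simpa [hq] using hqN)
    rw [Fintype.card_fin, ← hq] at this
    rw [mul_assoc]
    exact Nat.mul_le_mul_left 2 this
  obtain ⟨E, hE, hlin, -, hav⟩ := exists_linear_card_avoiders_mul_pow_le (α := Fin N)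
    (b := 2 * q.choose k) hk (by simpa using hkq.trans hqN) (by simpa using hdens) s
    (by simpa using hs)
  have hempty : avoiders E = ∅ := by
    rw [Fintype.card_fin] at hav
    exact card_eq_zero.1 (Nat.eq_zero_of_not_pos fun h =>
      (hav.trans_lt hfac).not_ge (Nat.le_mul_of_pos_left _ h))
  refine ⟨N, E, hE, hlin, fun r hr => ?_⟩
  obtain ⟨φ, hφ⟩ := exists_equiv_fin_lt_iff r
  set ψ : Equiv.Perm (Fin N) := φ.trans (finCongr (Fintype.card_fin N))
  have hψ : ∀ x y, r x y ↔ ψ x < ψ y := fun x y => by simp [ψ, hφ]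
  obtain ⟨e, he, hψe⟩ : ∃ e ∈ E, IsMonoOn ψ e := by
    simpa [hempty] using (mem_avoiders (φ := ψ) (E := E)).not
  obtain ⟨x, hx, hex, hmono⟩ := hψe.exists_strictMono_image_eq (hE e he)
  exact ⟨e, he, x, hx, hex, by simpa only [hψ] using hmono⟩
end

section
/- Energy boost from irregularity: if an ordered triple (V₁,V₂,V₃) of subsets of the colors of a palette Q on n colors is not ε-regular, then there are bipartitions V_i = V_i¹ ∪ V_i² (i = 1,2,3) such that q evaluated on these refined partitions exceeds q(V₁,V₂,V₃) by at least ε⁵·|V₁||V₂||V₃|/n³. -/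
open Finset

/-- The order-sensitive pattern density of a palette `Q` on the triple of color
sets `(V₁, V₂, V₃)`. -/
noncomputable def pdensity {n : ℕ} (Q : Finset (Fin n × Fin n × Fin n))
    (V₁ V₂ V₃ : Finset (Fin n)) : ℝ :=
  (((V₁ ×ˢ (V₂ ×ˢ V₃)).filter (fun p => p ∈ Q)).card : ℝ) /
    ((V₁.card : ℝ) * (V₂.card : ℝ) * (V₃.card : ℝ))

/-- The energy `q(V₁,V₂,V₃) = (|V₁||V₂||V₃|/n³)·d²(V₁,V₂,V₃)`. -/
noncomputable def energy {n : ℕ} (Q : Finset (Fin n × Fin n × Fin n))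
    (V₁ V₂ V₃ : Finset (Fin n)) : ℝ :=
  ((V₁.card : ℝ) * (V₂.card : ℝ) * (V₃.card : ℝ) / (n : ℝ) ^ 3) *
    (pdensity Q V₁ V₂ V₃) ^ 2

/-- The ordered triple `(V₁,V₂,V₃)` is `ε`-regular in `Q`. -/
def EpsRegular {n : ℕ} (Q : Finset (Fin n × Fin n × Fin n)) (ε : ℝ)
    (V₁ V₂ V₃ : Finset (Fin n)) : Prop :=
  ∀ W₁ ⊆ V₁, ∀ W₂ ⊆ V₂, ∀ W₃ ⊆ V₃,
    ε * (V₁.card : ℝ) ≤ (W₁.card : ℝ) →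
    ε * (V₂.card : ℝ) ≤ (W₂.card : ℝ) →
    ε * (V₃.card : ℝ) ≤ (W₃.card : ℝ) →
    |pdensity Q W₁ W₂ W₃ - pdensity Q V₁ V₂ V₃| ≤ ε

/-!
Split each `Vᵢ` into a witness `Wᵢ` of irregularity and its complement. With `e` the pattern
count and `m = |A||B||C|` of a triple, the refined energy is `n⁻³ ∑ e²/m` over the eight parts.
Cauchy–Schwarz on the seven parts other than `W₁ × W₂ × W₃` shows that it exceeds `n⁻³ e(V)²/m(V)`
by at least `n⁻³ (d(W) - d(V))² m(W) ≥ n⁻³ ε² · ε³ m(V)`.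
-/

/-- `(e₀, m₀)` is one part and `(e - e₀, m - m₀)` the rest, whose energy `S` is bounded below
by Cauchy–Schwarz. -/
theorem sq_div_add_sq_sub_mul_le {e₀ e m₀ m S : ℝ} (h₀ : 0 < m₀) (hm : m₀ ≤ m) (hS : 0 ≤ S)
    (hCS : (e - e₀) ^ 2 ≤ S * (m - m₀)) :
    e ^ 2 / m + (e₀ / m₀ - e / m) ^ 2 * m₀ ≤ e₀ ^ 2 / m₀ + S := by
  have hm' : m ≠ 0 := (h₀.trans_le hm).ne'
  obtain ⟨x, rfl⟩ : ∃ x, e₀ = x * m₀ := ⟨e₀ / m₀, by field_simp⟩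
  obtain ⟨y, rfl⟩ : ∃ y, e = y * m := ⟨e / m, by field_simp⟩
  rw [mul_div_cancel_right₀ _ h₀.ne', mul_div_cancel_right₀ _ hm', mul_pow, mul_pow,
    sq m, sq m₀, ← mul_assoc, ← mul_assoc, mul_div_cancel_right₀ _ h₀.ne',
    mul_div_cancel_right₀ _ hm']
  rcases hm.lt_or_eq with hlt | rfl
  · have hmul : (y ^ 2 * m + (x - y) ^ 2 * m₀ - x ^ 2 * m₀) * (m - m₀) ≤ S * (m - m₀) :=
      calc _ = (y * m - x * m₀) ^ 2 - m₀ ^ 2 * (x - y) ^ 2 := by ring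
        _ ≤ (y * m - x * m₀) ^ 2 := sub_le_self _ (by positivity)
        _ ≤ S * (m - m₀) := hCS
    linarith [le_of_mul_le_mul_right hmul (sub_pos.2 hlt)]
  · nlinarith [sq_nonneg (x - y), sq_nonneg m₀]

theorem sq_sum_div_add_sq_sub_mul_le_sum_sq_div {ι : Type*} [DecidableEq ι] {s : Finset ι}
    {e m : ι → ℝ} (hm : ∀ i ∈ s, 0 ≤ m i) (he : ∀ i ∈ s, m i = 0 → e i = 0) {i₀ : ι}
    (hi₀ : i₀ ∈ s) (h₀ : 0 < m i₀) :
    (∑ i ∈ s, e i) ^ 2 / ∑ i ∈ s, m i +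
        (e i₀ / m i₀ - (∑ i ∈ s, e i) / ∑ i ∈ s, m i) ^ 2 * m i₀ ≤
      ∑ i ∈ s, e i ^ 2 / m i := by
  have hrest : ∀ i ∈ s.erase i₀, 0 ≤ m i := fun i hi => hm i (mem_of_mem_erase hi)
  have hterm : ∀ i ∈ s.erase i₀, 0 ≤ e i ^ 2 / m i :=
    fun i hi => div_nonneg (sq_nonneg _) (hrest i hi)
  have hCS : (∑ i ∈ s.erase i₀, e i) ^ 2 ≤
      (∑ i ∈ s.erase i₀, e i ^ 2 / m i) * ∑ i ∈ s.erase i₀, m i := by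
    refine sum_sq_le_sum_mul_sum_of_sq_le_mul _ hterm hrest fun i hi => ?_
    rcases (hrest i hi).eq_or_lt with hz | hpos
    · simp [he i (mem_of_mem_erase hi) hz.symm]
    · rw [div_mul_cancel₀ _ hpos.ne']
  rw [← add_sum_erase s e hi₀, ← add_sum_erase s m hi₀, ← add_sum_erase s _ hi₀]
  refine sq_div_add_sq_sub_mul_le h₀ (le_add_of_nonneg_right (sum_nonneg hrest))
    (sum_nonneg hterm) ?_
  simpa only [add_sub_cancel_left] using hCS

def IsBipartition {α : Type*} [DecidableEq α] (f : Bool → Finset α) (V : Finset α) : Prop :=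
  f true ∪ f false = V ∧ Disjoint (f true) (f false)

theorem sum_product_of_isBipartition {α β γ M : Type*} [DecidableEq α] [DecidableEq β]
    [DecidableEq γ] [AddCommMonoid M] {f₁ : Bool → Finset α} {f₂ : Bool → Finset β}
    {f₃ : Bool → Finset γ} {V₁ : Finset α} {V₂ : Finset β} {V₃ : Finset γ}
    (h₁ : IsBipartition f₁ V₁) (h₂ : IsBipartition f₂ V₂) (h₃ : IsBipartition f₃ V₃)
    (w : α × β × γ → M) :
    ∑ b₁, ∑ b₂, ∑ b₃, ∑ x ∈ f₁ b₁ ×ˢ (f₂ b₂ ×ˢ f₃ b₃), w x = ∑ x ∈ V₁ ×ˢ (V₂ ×ˢ V₃), w x := by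
  simp only [sum_product, Fintype.sum_bool, ← sum_add_distrib, ← sum_union h₁.2,
    ← sum_union h₂.2, ← sum_union h₃.2, h₁.1, h₂.1, h₃.1]

section Palette

variable {n : ℕ} (Q : Finset (Fin n × Fin n × Fin n))

def patternCount (A B C : Finset (Fin n)) : ℕ := #((A ×ˢ (B ×ˢ C)).filter (fun p => p ∈ Q))

theorem pdensity_eq_div (A B C : Finset (Fin n)) :
    pdensity Q A B C = patternCount Q A B C / ((#A : ℝ) * #B * #C) := rfl

theorem patternCount_le_mul (A B C : Finset (Fin n)) : patternCount Q A B C ≤ #A * #B * #C :=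
  (card_filter_le _ _).trans_eq (by rw [card_product, card_product, mul_assoc])

theorem energy_eq_div (A B C : Finset (Fin n)) :
    energy Q A B C = (patternCount Q A B C : ℝ) ^ 2 / (#A * #B * #C) / (n : ℝ) ^ 3 := by
  rw [energy, pdensity_eq_div]
  by_cases h : (#A : ℝ) * #B * #C = 0
  · simp [h]
  · field_simp

variable {f₁ f₂ f₃ : Bool → Finset (Fin n)} {V₁ V₂ V₃ : Finset (Fin n)}

theorem sum_patternCount_of_isBipartition (h₁ : IsBipartition f₁ V₁)
    (h₂ : IsBipartition f₂ V₂) (h₃ : IsBipartition f₃ V₃) :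
    ∑ b₁, ∑ b₂, ∑ b₃, (patternCount Q (f₁ b₁) (f₂ b₂) (f₃ b₃) : ℝ) = patternCount Q V₁ V₂ V₃ := by
  simp only [patternCount, natCast_card_filter]
  exact sum_product_of_isBipartition h₁ h₂ h₃ _

theorem sum_card_mul_of_isBipartition (h₁ : IsBipartition f₁ V₁)
    (h₂ : IsBipartition f₂ V₂) (h₃ : IsBipartition f₃ V₃) :
    ∑ b₁, ∑ b₂, ∑ b₃, ((#(f₁ b₁) : ℝ) * #(f₂ b₂) * #(f₃ b₃)) = (#V₁ : ℝ) * #V₂ * #V₃ := by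
  simpa [card_product, mul_assoc] using sum_product_of_isBipartition h₁ h₂ h₃ fun _ => (1 : ℝ)

theorem energy_add_sq_sub_pdensity_le_sum_energy (h₁ : IsBipartition f₁ V₁)
    (h₂ : IsBipartition f₂ V₂) (h₃ : IsBipartition f₃ V₃)
    (h₀ : 0 < (#(f₁ true) : ℝ) * #(f₂ true) * #(f₃ true)) :
    energy Q V₁ V₂ V₃ + (pdensity Q (f₁ true) (f₂ true) (f₃ true) - pdensity Q V₁ V₂ V₃) ^ 2 *
        ((#(f₁ true) : ℝ) * #(f₂ true) * #(f₃ true)) / (n : ℝ) ^ 3 ≤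
      ∑ b₁, ∑ b₂, ∑ b₃, energy Q (f₁ b₁) (f₂ b₂) (f₃ b₃) := by
  let e : Bool × Bool × Bool → ℝ := fun b => patternCount Q (f₁ b.1) (f₂ b.2.1) (f₃ b.2.2)
  let m : Bool × Bool × Bool → ℝ := fun b => (#(f₁ b.1) : ℝ) * #(f₂ b.2.1) * #(f₃ b.2.2)
  have he : ∑ b, e b = patternCount Q V₁ V₂ V₃ := by
    simpa only [Fintype.sum_prod_type] using sum_patternCount_of_isBipartition Q h₁ h₂ h₃
  have hm : ∑ b, m b = (#V₁ : ℝ) * #V₂ * #V₃ := by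
    simpa only [Fintype.sum_prod_type] using sum_card_mul_of_isBipartition h₁ h₂ h₃
  have hem : ∀ b, e b ≤ m b := fun b => by
    simp only [e, m]
    exact_mod_cast patternCount_le_mul Q (f₁ b.1) (f₂ b.2.1) (f₃ b.2.2)
  have key := sq_sum_div_add_sq_sub_mul_le_sum_sq_div (s := univ) (e := e) (m := m)
    (fun b _ => by positivity) (fun b _ hb => le_antisymm (hb ▸ hem b) (Nat.cast_nonneg _))
    (mem_univ (true, true, true)) h₀
  rw [he, hm] at key
  simp only [energy_eq_div, pdensity_eq_div, ← sum_div, ← add_div]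
  gcongr
  simpa only [Fintype.sum_prod_type] using key

end Palette

/-- Energy boost from irregularity: an irregular triple admits bipartitions of its
three sets whose refined energy exceeds the original by `ε⁵|V₁||V₂||V₃|/n³`. -/
theorem energy_boost_of_irregular {n : ℕ} (Q : Finset (Fin n × Fin n × Fin n))
    (ε : ℝ) (hε : 0 < ε) (V₁ V₂ V₃ : Finset (Fin n))
    (h : ¬ EpsRegular Q ε V₁ V₂ V₃) :
    ∃ f₁ f₂ f₃ : Bool → Finset (Fin n),
      f₁ true ∪ f₁ false = V₁ ∧ Disjoint (f₁ true) (f₁ false) ∧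
      f₂ true ∪ f₂ false = V₂ ∧ Disjoint (f₂ true) (f₂ false) ∧
      f₃ true ∪ f₃ false = V₃ ∧ Disjoint (f₃ true) (f₃ false) ∧
      energy Q V₁ V₂ V₃ +
          ε ^ 5 * ((V₁.card : ℝ) * (V₂.card : ℝ) * (V₃.card : ℝ)) / (n : ℝ) ^ 3 ≤
        ∑ b₁ : Bool, ∑ b₂ : Bool, ∑ b₃ : Bool, energy Q (f₁ b₁) (f₂ b₂) (f₃ b₃) := by
  obtain ⟨W₁, hW₁, W₂, hW₂, W₃, hW₃, h₁, h₂, h₃, hgap⟩ := by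
    simpa only [EpsRegular, not_forall, not_le, exists_prop] using h
  have hsize : ε ^ 3 * ((#V₁ : ℝ) * #V₂ * #V₃) ≤ (#W₁ : ℝ) * #W₂ * #W₃ :=
    calc _ = (ε * #V₁) * (ε * #V₂) * (ε * #V₃) := by ring
      _ ≤ _ := by gcongr
  have hW : 0 < (#W₁ : ℝ) * #W₂ * #W₃ := by
    by_contra! hle
    -- then both densities are junk values `_ / 0 = 0`
    have hW0 : (#W₁ : ℝ) * #W₂ * #W₃ = 0 := le_antisymm hle (by positivity)
    have hV0 : (#V₁ : ℝ) * #V₂ * #V₃ = 0 :=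
      le_antisymm (nonpos_of_mul_nonpos_right (hW0 ▸ hsize) (by positivity)) (by positivity)
    rw [pdensity_eq_div, pdensity_eq_div, hW0, hV0, div_zero, div_zero, sub_zero, abs_zero] at hgap
    exact hε.not_gt hgap
  have split {W V : Finset (Fin n)} (hWV : W ⊆ V) : IsBipartition (fun b => cond b W (V \ W)) V :=
    ⟨union_sdiff_of_subset hWV, disjoint_sdiff⟩
  refine ⟨_, _, _, (split hW₁).1, (split hW₁).2, (split hW₂).1, (split hW₂).2, (split hW₃).1,
    (split hW₃).2, le_trans ?_ (energy_add_sq_sub_pdensity_le_sum_energy Q (split hW₁) (split hW₂)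
      (split hW₃) hW)⟩
  have hgap' : ε ^ 2 ≤ (pdensity Q W₁ W₂ W₃ - pdensity Q V₁ V₂ V₃) ^ 2 := by
    simpa only [sq_abs] using pow_le_pow_left₀ hε.le hgap.le 2
  gcongr energy Q V₁ V₂ V₃ + ?_ / _
  calc ε ^ 5 * ((#V₁ : ℝ) * #V₂ * #V₃) = ε ^ 2 * (ε ^ 3 * ((#V₁ : ℝ) * #V₂ * #V₃)) := by ring
    _ ≤ _ := mul_le_mul hgap' hsize (by positivity) (by positivity)
end
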